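/- With the notation of the Latin-square basis construction, each state |φ_{n,m,l}⟩ = (1/d) Σ_{k∈Z_d} ω^{nk} |k⟩ ⊗ Σ_{i∈Z_d} ω^{mi} |i⟩ ⊗ |j(i,k+l)⟩ is absolutely maximally entangled: the reduced density matrix of |φ_{n,m,l}⟩⟨φ_{n,m,l}| on each single subsystem (obtained by tracing out the other two tensor factors) equals I_d / d. -/

import Mathlib

/-!
Every `φ_{n,m,l}` is supported on `{(k, i, j) | L i j = k + l}`, where all its amplitudes have
modulus `1/d`. Since `L` is a Latin square, any two coordinates of a support point determine the
third, so two distinct values of one index never occur with the same values of the other two: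
each reduced density matrix is diagonal. Each of its diagonal entries counts the `d` support
points in a slice, with weight `1/d²`.
-/

open Complex

/-- The component of `|φ_{n,m,l}⟩` at `|k⟩⊗|i⟩⊗|j⟩`. -/
noncomputable def phiC (d : ℕ) (L : ZMod d → ZMod d → ZMod d)
    (n m l : ZMod d) (k i j : ZMod d) : ℂ :=
  (d : ℂ)⁻¹ * Complex.exp (2 * Real.pi * Complex.I / d) ^ (n.val * k.val) *
    Complex.exp (2 * Real.pi * Complex.I / d) ^ (m.val * i.val) *
    (if L i j = k + l then 1 else 0)

theorem Fintype.sum_ite_eq_of_bijective {α β M : Type*} [Fintype α] [Fintype β] [DecidableEq β]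
    [AddCommMonoid M] {f : α → β} (hf : Function.Bijective f) (b : β) (x : M) :
    ∑ a, (if f a = b then x else 0) = x := by
  rw [Fintype.sum_bijective f hf _ (fun b' => if b' = b then x else 0) fun _ => rfl]
  simp

theorem sum_sum_mul_conj_eq_ite {α β γ : Type*} [Fintype β] [Fintype γ] [DecidableEq α]
    (ψ : α → β → γ → ℂ) (r : ℂ)
    (hsupp : ∀ a a' b c, ψ a b c ≠ 0 → ψ a' b c ≠ 0 → a = a')
    (hmass : ∀ a, ∑ b, ∑ c, ψ a b c * (starRingEnd ℂ) (ψ a b c) = r) (a a' : α) :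
    (∑ b, ∑ c, ψ a b c * (starRingEnd ℂ) (ψ a' b c)) = if a = a' then r else 0 := by
  split_ifs with h
  · subst h
    exact hmass a
  · refine Finset.sum_eq_zero fun b _ => Finset.sum_eq_zero fun c _ => ?_
    by_cases hψ : ψ a b c = 0
    · rw [hψ, zero_mul]
    · have hψ' : ψ a' b c = 0 := by_contra fun hψ' => h (hsupp a a' b c hψ hψ')
      rw [hψ', map_zero, mul_zero]

theorem norm_exp_two_pi_I_div (d : ℕ) : ‖exp (2 * Real.pi * I / d)‖ = 1 := by
  simp [Complex.norm_exp]

section phiC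

variable {d : ℕ} {L : ZMod d → ZMod d → ZMod d} {n m l : ZMod d}

theorem eq_add_of_phiC_ne_zero {k i j : ZMod d} (h : phiC d L n m l k i j ≠ 0) :
    L i j = k + l := by
  by_contra hL
  simp [phiC, hL] at h

theorem phiC_mul_conj_self (k i j : ZMod d) :
    phiC d L n m l k i j * (starRingEnd ℂ) (phiC d L n m l k i j) =
      ((d : ℂ) ^ 2)⁻¹ * if L i j = k + l then 1 else 0 := by
  rw [RCLike.mul_conj]
  split_ifs <;> simp [phiC, *, norm_exp_two_pi_I_div]

end phiC

/-- Each `|φ_{n,m,l}⟩` is absolutely maximally entangled: the reduced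
density matrix on each of the three subsystems equals `I_d/d`. -/
theorem phiC_absolutely_maximally_entangled (d : ℕ) [NeZero d]
    (L : ZMod d → ZMod d → ZMod d)
    (hrow : ∀ i, Function.Bijective (L i))
    (hcol : ∀ j, Function.Bijective fun i => L i j)
    (n m l : ZMod d) :
    (∀ k k' : ZMod d,
      (∑ i : ZMod d, ∑ j : ZMod d,
        phiC d L n m l k i j * (starRingEnd ℂ) (phiC d L n m l k' i j)) =
        if k = k' then (d : ℂ)⁻¹ else 0) ∧
    (∀ i i' : ZMod d,
      (∑ k : ZMod d, ∑ j : ZMod d,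
        phiC d L n m l k i j * (starRingEnd ℂ) (phiC d L n m l k i' j)) =
        if i = i' then (d : ℂ)⁻¹ else 0) ∧
    (∀ j j' : ZMod d,
      (∑ k : ZMod d, ∑ i : ZMod d,
        phiC d L n m l k i j * (starRingEnd ℂ) (phiC d L n m l k i j')) =
        if j = j' then (d : ℂ)⁻¹ else 0) := by
  have hd : (d : ℂ) ≠ 0 := Nat.cast_ne_zero.2 (NeZero.ne d)
  have hscale : ∀ N : ℂ, N = d → ((d : ℂ) ^ 2)⁻¹ * N = (d : ℂ)⁻¹ := by
    rintro N rfl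
    field_simp
  have hk : ∀ c : ZMod d, ∑ k : ZMod d, (if c = k + l then (1 : ℂ) else 0) = 1 := fun c => by
    simpa only [eq_comm] using
      Fintype.sum_ite_eq_of_bijective (AddGroup.addRight_bijective l) c (1 : ℂ)
  refine ⟨fun k k' => ?_, fun i i' => ?_, fun j j' => ?_⟩
  · refine sum_sum_mul_conj_eq_ite (fun k i j => phiC d L n m l k i j) _
      (fun k k' i j h h' => add_right_cancel
        ((eq_add_of_phiC_ne_zero h).symm.trans (eq_add_of_phiC_ne_zero h'))) (fun k => ?_) k k'
    simp only [phiC_mul_conj_self, ← Finset.mul_sum]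
    refine hscale _ ?_
    simp [Fintype.sum_ite_eq_of_bijective (hrow _)]
  · refine sum_sum_mul_conj_eq_ite (fun i k j => phiC d L n m l k i j) _
      (fun i i' k j h h' => (hcol j).injective
        ((eq_add_of_phiC_ne_zero h).trans (eq_add_of_phiC_ne_zero h').symm)) (fun i => ?_) i i'
    simp only [phiC_mul_conj_self, ← Finset.mul_sum]
    refine hscale _ ?_
    rw [Finset.sum_comm]
    simp [hk]
  · refine sum_sum_mul_conj_eq_ite (fun j k i => phiC d L n m l k i j) _
      (fun j j' k i h h' => (hrow i).injective
        ((eq_add_of_phiC_ne_zero h).trans (eq_add_of_phiC_ne_zero h').symm)) (fun j => ?_) j j'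
    simp only [phiC_mul_conj_self, ← Finset.mul_sum]
    refine hscale _ ?_
    rw [Finset.sum_comm]
    simp [hk]
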